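/- arXiv:math/0406157 — 4 statements merged into one kernel-verified Lean document; each statement's English description precedes it below -/
import Mathlib

section
/- Let C be a configuration of pebbles on K_n □ K_n. If the citizen subgraph of C has a police component, then C is solvable. -/
open scoped Classical

/-- A single pebbling move on a graph `G`: remove two pebbles from a vertex `u`
(which must carry at least two pebbles) and place one pebble on a neighbor `v`. -/
def PebblingMove {V : Type*} (G : SimpleGraph V) (C C' : V → ℕ) : Prop :=
  ∃ u v, G.Adj u v ∧ 2 ≤ C u ∧
    C' = fun w => if w = u then C u - 2 else if w = v then C v + 1 else C w

/-- A configuration is solvable if, for every root `r`, some finite sequence of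
pebbling moves produces a configuration with at least one pebble on `r`. -/
def PebblingSolvable {V : Type*} (G : SimpleGraph V) (C : V → ℕ) : Prop :=
  ∀ r : V, ∃ C', Relation.ReflTransGen (PebblingMove G) C C' ∧ 1 ≤ C' r

/-- Auxiliary: the result of moving two pebbles from `a` onto `b`. -/
noncomputable def pebMv {V : Type*} (C : V → ℕ) (a b : V) : V → ℕ :=
  fun w => if w = a then C a - 2 else if w = b then C b + 1 else C w

lemma pebMv_move {V : Type*} {G : SimpleGraph V} {C : V → ℕ} {a b : V}
    (hab : G.Adj a b) (ha : 2 ≤ C a) : PebblingMove G C (pebMv C a b) :=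
  ⟨a, b, hab, ha, rfl⟩

lemma pebMv_self {V : Type*} (C : V → ℕ) {a b : V} (hab : a ≠ b) :
    pebMv C a b b = C b + 1 := by
  simp [pebMv, hab.symm]

lemma pebMv_other {V : Type*} (C : V → ℕ) {a b z : V} (hza : z ≠ a) (hzb : z ≠ b) :
    pebMv C a b z = C z := by
  simp [pebMv, hza, hzb]

abbrev Kbox (n : ℕ) : SimpleGraph (Fin n × Fin n) :=
  (⊤ : SimpleGraph (Fin n)).boxProd (⊤ : SimpleGraph (Fin n))

section KnKn

variable {n : ℕ}


lemma not_adj_coords {a r : Fin n × Fin n} (hne : a ≠ r)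
    (hnadj : ¬ (Kbox n).Adj a r) : a.1 ≠ r.1 ∧ a.2 ≠ r.2 := by
  constructor
  · intro h1
    by_cases h2 : a.2 = r.2
    · exact hne (Prod.ext h1 h2)
    · exact hnadj (SimpleGraph.boxProd_adj.2 (Or.inr ⟨h2, h1⟩))
  · intro h2
    by_cases h1 : a.1 = r.1
    · exact hne (Prod.ext h1 h2)
    · exact hnadj (SimpleGraph.boxProd_adj.2 (Or.inl ⟨h1, h2⟩))

/-- If two adjacent vertices of `K_n □ K_n` each carry at least two pebbles,
we can reach any root. -/
lemma two_adjacent_solvable {D : Fin n × Fin n → ℕ} {a b : Fin n × Fin n}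
    (hab : (Kbox n).Adj a b) (ha : 2 ≤ D a) (hb : 2 ≤ D b) (r : Fin n × Fin n) :
    ∃ D', Relation.ReflTransGen (PebblingMove (Kbox n)) D D' ∧ 1 ≤ D' r := by
  by_cases hra : r = a
  · exact ⟨D, Relation.ReflTransGen.refl, by subst hra; omega⟩
  by_cases hrb : r = b
  · exact ⟨D, Relation.ReflTransGen.refl, by subst hrb; omega⟩
  by_cases har : (Kbox n).Adj a r
  · refine ⟨pebMv D a r, Relation.ReflTransGen.single (pebMv_move har ha), ?_⟩
    rw [pebMv_self D har.ne]; omega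
  by_cases hbr : (Kbox n).Adj b r
  · refine ⟨pebMv D b r, Relation.ReflTransGen.single (pebMv_move hbr hb), ?_⟩
    rw [pebMv_self D hbr.ne]; omega
  -- hard case: r at distance 2 from both a and b
  obtain ⟨ha1, ha2⟩ := not_adj_coords (fun h => hra h.symm) har
  obtain ⟨hb1, hb2⟩ := not_adj_coords (fun h => hrb h.symm) hbr
  -- choose the common neighbor x of a, b and r
  have hx : ∃ x : Fin n × Fin n, (Kbox n).Adj a x ∧ (Kbox n).Adj b x ∧ (Kbox n).Adj x r := by
    rcases SimpleGraph.boxProd_adj.1 hab with ⟨h1, h2⟩ | ⟨h1, h2⟩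
    · -- a.1 ≠ b.1 (as ⊤-Adj), a.2 = b.2 : take x = (r.1, a.2)
      exact ⟨(r.1, a.2),
        SimpleGraph.boxProd_adj.2 (Or.inl ⟨ha1, rfl⟩),
        SimpleGraph.boxProd_adj.2 (Or.inl ⟨hb1, h2.symm⟩),
        SimpleGraph.boxProd_adj.2 (Or.inr ⟨ha2, rfl⟩)⟩
    · -- a.2 ≠ b.2, a.1 = b.1 : take x = (a.1, r.2)
      exact ⟨(a.1, r.2),
        SimpleGraph.boxProd_adj.2 (Or.inr ⟨ha2, rfl⟩),
        SimpleGraph.boxProd_adj.2 (Or.inr ⟨hb2, h2.symm⟩),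
        SimpleGraph.boxProd_adj.2 (Or.inl ⟨ha1, rfl⟩)⟩
  obtain ⟨x, hax, hbx, hxr⟩ := hx
  have hD1 := pebMv_move (C := D) hax ha
  set D1 := pebMv D a x with hD1def
  have hD1b : D1 b = D b := pebMv_other D hab.ne.symm hbx.ne
  have hD1x : D1 x = D x + 1 := pebMv_self D hax.ne
  have hD2 := pebMv_move (C := D1) hbx (by omega)
  set D2 := pebMv D1 b x with hD2def
  have hD2x : D2 x = D1 x + 1 := pebMv_self D1 hbx.ne
  have hD3 := pebMv_move (C := D2) hxr (by omega)
  refine ⟨pebMv D2 x r, ?_, ?_⟩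
  · exact Relation.ReflTransGen.head hD1 (Relation.ReflTransGen.head hD2
      (Relation.ReflTransGen.single hD3))
  · rw [pebMv_self D2 hxr.ne]; omega

/-- Cascading pebbles along a path in the citizen subgraph: starting from a vertex
with at least two pebbles, we can transfer a pebble all the way to the other end,
leaving a designated vertex `u` off the path untouched. -/
lemma cascade {S : Set (Fin n × Fin n)} {a b : S}
    (q : ((Kbox n).induce S).Walk a b) :
    ∀ (_ : q.IsPath) (u : Fin n × Fin n) (_ : ∀ z ∈ q.support, (z : Fin n × Fin n) ≠ u)
      (D : Fin n × Fin n → ℕ), (∀ z ∈ q.support, 1 ≤ D z) → 2 ≤ D a →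
    ∃ D', Relation.ReflTransGen (PebblingMove (Kbox n)) D D' ∧ 2 ≤ D' b ∧ D' u = D u := by
  induction q with
  | nil => exact fun _ u _ D _ hDa => ⟨D, Relation.ReflTransGen.refl, hDa, rfl⟩
  | @cons a c b hac q' ih =>
    intro hq u hu D hsupp hDa
    have hq' : q'.IsPath := ((SimpleGraph.Walk.cons_isPath_iff hac q').1 hq).1
    have hanotin : a ∉ q'.support := ((SimpleGraph.Walk.cons_isPath_iff hac q').1 hq).2
    have hGac : (Kbox n).Adj (a : Fin n × Fin n) (c : Fin n × Fin n) := hac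
    have hcs : c ∈ q'.support := q'.start_mem_support
    have hmemc : c ∈ (SimpleGraph.Walk.cons hac q').support := by
      rw [SimpleGraph.Walk.support_cons]; exact List.mem_cons_of_mem _ hcs
    have hmema : a ∈ (SimpleGraph.Walk.cons hac q').support :=
      SimpleGraph.Walk.start_mem_support _
    have hstep := pebMv_move (C := D) hGac hDa
    set D1 := pebMv D (a : Fin n × Fin n) (c : Fin n × Fin n) with hD1def
    have hne : (a : Fin n × Fin n) ≠ (c : Fin n × Fin n) := hGac.ne
    have hD1c : D1 c = D c + 1 := pebMv_self D hne
    obtain ⟨D', hrtg, hD'b, hD'u⟩ := ih hq' u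
      (fun z hz => hu z (by rw [SimpleGraph.Walk.support_cons]; exact List.mem_cons_of_mem _ hz))
      D1
      (fun z hz => by
        have hza : (z : Fin n × Fin n) ≠ (a : Fin n × Fin n) :=
          fun hh => hanotin (by rwa [Subtype.coe_injective hh] at hz)
        by_cases hzc : (z : Fin n × Fin n) = (c : Fin n × Fin n)
        · rw [hzc, hD1c]; omega
        · rw [hD1def, pebMv_other D hza hzc]
          exact hsupp z (by rw [SimpleGraph.Walk.support_cons]; exact List.mem_cons_of_mem _ hz))
      (by rw [hD1c]; have := hsupp c hmemc; omega)
    refine ⟨D', Relation.ReflTransGen.head hstep hrtg, hD'b, ?_⟩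
    rw [hD'u]
    exact pebMv_other D (Ne.symm (hu a hmema)) (Ne.symm (hu c hmemc))

end KnKn

/-- If the citizen subgraph of a configuration `C` on `K_n □ K_n` (the subgraph induced
by the vertices carrying at least one pebble) has a police component (a connected
component containing at least two vertices carrying at least two pebbles),
then `C` is solvable. -/
theorem solvable_of_police_component (n : ℕ) (C : Fin n × Fin n → ℕ)
    (h : ∃ u v : {w : Fin n × Fin n // 1 ≤ C w}, u ≠ v ∧ 2 ≤ C u.1 ∧ 2 ≤ C v.1 ∧
      (((⊤ : SimpleGraph (Fin n)).boxProd (⊤ : SimpleGraph (Fin n))).induce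
        {w | 1 ≤ C w}).Reachable u v) :
    PebblingSolvable ((⊤ : SimpleGraph (Fin n)).boxProd (⊤ : SimpleGraph (Fin n))) C := by
  intro r
  obtain ⟨u, v, hne, hu2, hv2, hreach⟩ := h
  obtain ⟨p0⟩ := hreach
  obtain ⟨p, hp⟩ := p0.toPath
  cases p with
  | nil => exact absurd rfl hne
  | @cons _ w _ hac q =>
    have hq : q.IsPath := ((SimpleGraph.Walk.cons_isPath_iff hac q).1 hp).1
    have hunotin : u ∉ q.support := ((SimpleGraph.Walk.cons_isPath_iff hac q).1 hp).2
    have hrq : q.reverse.IsPath := (SimpleGraph.Walk.isPath_reverse_iff q).2 hq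
    obtain ⟨C1, hrtg1, hC1w, hC1u⟩ := cascade q.reverse hrq u.1
      (fun z hz => by
        have hzq : z ∈ q.support := by
          rwa [SimpleGraph.Walk.support_reverse, List.mem_reverse] at hz
        exact fun hh => hunotin (by rwa [Subtype.coe_injective hh] at hzq))
      C (fun z _ => z.2) hv2
    have hadj : (Kbox n).Adj u.1 w.1 := hac
    obtain ⟨D', hrtg2, hD'r⟩ :=
      two_adjacent_solvable hadj (by rw [hC1u]; exact hu2) hC1w r
    exact ⟨D', hrtg1.trans hrtg2, hD'r⟩
end

section
/- Let N = n² with n ≥ 1, m ≥ 1, (n,m) ≠ (1,1), q = N/(N+m−1), and let Z be the number of edges of the support of a uniformly random bipartite multigraph from B'(n,m). Then Var[Z] = (mq/(N+m−2)) · (N−1)(1−q). -/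
open scoped Classical

/-- The finite set `B'(n,m)` of all bipartite multigraphs on the vertex set of the
complete bipartite graph `K_{n,n}` with total edge multiplicity `m`: a multigraph is
a multiplicity function on the `n²` possible edges, which we encode as the pairs
`(i,j)` (the edge joining left-vertex `i` to right-vertex `j`). -/
def multigraphs (n m : ℕ) : Finset (Fin n × Fin n → ℕ) :=
  (Fintype.piFinset fun _ : Fin n × Fin n => Finset.range (m + 1)).filter
    fun f => ∑ e, f e = m

/-- The number of edges of the support of a multigraph, i.e. the number of edges
with positive multiplicity. -/
def suppSize {n : ℕ} (f : Fin n × Fin n → ℕ) : ℕ :=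
  (Finset.univ.filter fun e => 0 < f e).card

/-- The `k`-th moment of the support size. -/
noncomputable def momentSuppSize (n m k : ℕ) : ℝ :=
  (∑ f ∈ multigraphs n m, (suppSize f : ℝ) ^ k) / ((multigraphs n m).card : ℝ)

/-!
Write `Y = N - Z` for the number of empty edges; `Z` and `Y` have the same variance, and `Y` is a
sum of edge indicators, so its first two moments only involve the number of multigraphs in which
one, resp. two, prescribed edges are empty. Forcing `k` edges to be empty leaves the compositions
of `m` into `N - k` parts, of which there are `multichoose (N - k) m`, and the ratio
`multichoose b m / multichoose (b + 1) m = b / (b + m)` turns the variance into the stated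
rational function of `N` and `m`.
-/

open Finset

theorem Nat.multichoose_mul_add (b m : ℕ) :
    b.multichoose m * (b + m) = (b + 1).multichoose m * b := by
  rcases b with _ | c
  · rcases m with _ | k <;> simp [Nat.multichoose_zero_succ]
  · rw [Nat.multichoose_eq, Nat.multichoose_eq, show c + 1 + m - 1 = c + m by omega,
      show c + 1 + 1 + m - 1 = c + m + 1 by omega, add_assoc c 1 m, add_comm 1 m, ← add_assoc,
      Nat.choose_mul_succ_eq, show c + m + 1 - m = c + 1 by omega]

namespace Finset

theorem card_piAntidiag_nat {ι : Type*} [DecidableEq ι] (s : Finset ι) (n : ℕ) :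
    #(piAntidiag s n) = (#s).multichoose n := by
  rw [← card_finsuppAntidiag_nat_eq_multichoose, finsuppAntidiag, card_map, card_attach]

theorem filter_piAntidiag_forall_eq_zero {ι : Type*} [DecidableEq ι] (s t : Finset ι) (n : ℕ)
    [DecidablePred fun f : ι → ℕ => ∀ i ∈ t, f i = 0] :
    {f ∈ piAntidiag s n | ∀ i ∈ t, f i = 0} = piAntidiag (s \ t) n := by
  ext f
  simp only [mem_filter, mem_piAntidiag, mem_sdiff]
  constructor
  · rintro ⟨⟨rfl, hsupp⟩, hzero⟩
    refine ⟨sum_subset sdiff_subset fun i _ hi => ?_, fun i hi => ⟨hsupp i hi, ?_⟩⟩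
    · exact hzero i (by simp_all)
    · exact fun hit => hi (hzero i hit)
  · rintro ⟨rfl, hsupp⟩
    refine ⟨⟨(sum_subset sdiff_subset fun i _ hi => ?_).symm, fun i hi => (hsupp i hi).1⟩,
      fun i hit => ?_⟩
    all_goals by_contra hne; exact (hsupp i hne).2 (by simp_all)

theorem sum_card_filter_sq {α β : Type*} (s : Finset β) (t : Finset α) (r : β → α → Prop)
    [∀ b a, Decidable (r b a)] :
    ∑ b ∈ s, #{a ∈ t | r b a} ^ 2 = ∑ p ∈ t ×ˢ t, #{b ∈ s | r b p.1 ∧ r b p.2} := by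
  simp_rw [sq, ← card_product, ← filter_product]
  exact sum_card_bipartiteAbove_eq_sum_card_bipartiteBelow (s := s) (t := t ×ˢ t)
    fun b (p : α × α) => r b p.1 ∧ r b p.2

end Finset

theorem variance_eq_of_add_eq_const {ι : Type*} (s : Finset ι) (X Y : ι → ℝ) (c : ℝ)
    (h : ∀ x ∈ s, X x + Y x = c) :
    (∑ x ∈ s, X x ^ 2) / #s - ((∑ x ∈ s, X x) / #s) ^ 2
      = (∑ x ∈ s, Y x ^ 2) / #s - ((∑ x ∈ s, Y x) / #s) ^ 2 := by
  rcases s.eq_empty_or_nonempty with rfl | hs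
  · simp
  have hX : ∀ x ∈ s, X x = c - Y x := fun x hx => by linarith [h x hx]
  have hcard : (#s : ℝ) ≠ 0 := by exact_mod_cast hs.card_ne_zero
  rw [sum_congr rfl fun x hx => by rw [hX x hx], sum_congr rfl hX]
  simp only [sub_sq, sum_add_distrib, sum_sub_distrib, ← mul_sum, sum_const, nsmul_eq_mul]
  field_simp
  ring

section Compositions

variable {α : Type*} [Fintype α] [DecidableEq α] (m : ℕ)

theorem card_filter_piAntidiag_univ_forall_eq_zero (t : Finset α) :
    #{f ∈ piAntidiag (univ : Finset α) m | ∀ i ∈ t, f i = 0}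
      = (Fintype.card α - #t).multichoose m := by
  rw [filter_piAntidiag_forall_eq_zero univ t m, card_piAntidiag_nat,
    card_sdiff_of_subset (subset_univ t), card_univ]

theorem card_filter_piAntidiag_univ_eq_zero (i : α) :
    #{f ∈ piAntidiag (univ : Finset α) m | f i = 0} = (Fintype.card α - 1).multichoose m := by
  simpa using card_filter_piAntidiag_univ_forall_eq_zero m {i}

theorem sum_card_zeros_piAntidiag_univ :
    ∑ f ∈ piAntidiag (univ : Finset α) m, #{i | f i = 0}
      = Fintype.card α * (Fintype.card α - 1).multichoose m := by
  rw [show ∑ f ∈ piAntidiag (univ : Finset α) m, #{i | f i = 0}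
      = ∑ i, #{f ∈ piAntidiag (univ : Finset α) m | f i = 0} from
    sum_card_bipartiteAbove_eq_sum_card_bipartiteBelow _]
  simp [card_filter_piAntidiag_univ_eq_zero]

theorem sum_card_zeros_sq_piAntidiag_univ :
    ∑ f ∈ piAntidiag (univ : Finset α) m, #{i | f i = 0} ^ 2
      = Fintype.card α * (Fintype.card α - 1).multichoose m
        + Fintype.card α * (Fintype.card α - 1) * (Fintype.card α - 2).multichoose m := by
  rw [sum_card_filter_sq, sum_product]
  have row (i : α) : ∑ j, #{f ∈ piAntidiag (univ : Finset α) m | f i = 0 ∧ f j = 0}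
      = (Fintype.card α - 1).multichoose m
        + (Fintype.card α - 1) * (Fintype.card α - 2).multichoose m := by
    have pair (j : α) (hji : j ≠ i) : #{f ∈ piAntidiag (univ : Finset α) m | f i = 0 ∧ f j = 0}
        = (Fintype.card α - 2).multichoose m := by
      simpa [card_pair hji.symm] using card_filter_piAntidiag_univ_forall_eq_zero m {i, j}
    rw [← add_sum_erase _ _ (mem_univ i), sum_congr rfl fun j hj => pair j (ne_of_mem_erase hj)]
    simp [card_filter_piAntidiag_univ_eq_zero]
  simp only [row, sum_const, card_univ, smul_eq_mul]
  ring

theorem variance_card_pos_piAntidiag_univ [Nonempty α] (h : 3 ≤ Fintype.card α + m) :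
    (∑ f ∈ piAntidiag (univ : Finset α) m, (#{i | 0 < f i} : ℝ) ^ 2)
          / #(piAntidiag (univ : Finset α) m)
        - ((∑ f ∈ piAntidiag (univ : Finset α) m, (#{i | 0 < f i} : ℝ))
          / #(piAntidiag (univ : Finset α) m)) ^ 2
      = ((m : ℝ) * ((Fintype.card α : ℝ) / (Fintype.card α + m - 1)) /
          (Fintype.card α + m - 2)) *
        (((Fintype.card α : ℝ) - 1) * (1 - (Fintype.card α : ℝ) / (Fintype.card α + m - 1))) := by
  have hsplit (f : α → ℕ) : (#{i | 0 < f i} : ℝ) + #{i | f i = 0} = Fintype.card α := by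
    rw [← card_univ, ← card_filter_add_card_filter_not (s := univ) (fun i => 0 < f i)]
    simp [Nat.pos_iff_ne_zero]
  rw [variance_eq_of_add_eq_const _ _ _ _ fun f _ => hsplit f]
  simp only [← Nat.cast_pow, ← Nat.cast_sum, sum_card_zeros_piAntidiag_univ,
    sum_card_zeros_sq_piAntidiag_univ, card_piAntidiag_nat, card_univ]
  obtain ⟨k, hk⟩ : ∃ k, Fintype.card α = k + 1 :=
    ⟨_, (Nat.succ_pred_eq_of_pos Fintype.card_pos).symm⟩
  rw [hk] at h ⊢
  simp only [Nat.add_sub_cancel, show k + 1 - 2 = k - 1 by omega]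
  have hC : ((k + 1).multichoose m : ℝ) ≠ 0 := by
    rw [Nat.multichoose_eq]
    exact_mod_cast (Nat.choose_pos (by omega)).ne'
  have hD : (k.multichoose m : ℝ) * (k + m) = (k + 1).multichoose m * k := by
    exact_mod_cast Nat.multichoose_mul_add k m
  -- The factor `k` makes this hold also for `k = 0`, where `k - 1` truncates to `0`.
  have hE : (k : ℝ) * (k - 1).multichoose m * (k + m - 1) = k * k.multichoose m * (k - 1) := by
    rcases k with _ | j
    · simp
    · simp only [Nat.add_sub_cancel]
      push_cast
      rw [show (j : ℝ) + 1 + m - 1 = j + m by ring, add_sub_cancel_right, mul_assoc, mul_assoc]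
      congr 1
      exact_mod_cast Nat.multichoose_mul_add j m
  have hkm2 : (2 : ℝ) ≤ k + m := by exact_mod_cast (by omega : 2 ≤ k + m)
  have hkm : (k : ℝ) + m ≠ 0 := by linarith
  have hkm1 : (k : ℝ) + m - 1 ≠ 0 := by linarith
  push_cast
  rw [show (k : ℝ) + 1 + m - 1 = k + m by ring, show (k : ℝ) + 1 + m - 2 = k + m - 1 by ring,
    mul_assoc ((k : ℝ) + 1) k, eq_div_of_mul_eq hkm1 hE, eq_div_of_mul_eq hkm hD]
  field_simp
  ring

end Compositions

theorem multigraphs_eq_piAntidiag (n m : ℕ) : multigraphs n m = piAntidiag univ m := by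
  ext f
  simp only [multigraphs, mem_filter, Fintype.mem_piFinset, mem_range, mem_piAntidiag, mem_univ,
    implies_true, and_true, and_iff_right_iff_imp]
  rintro rfl e
  exact Nat.lt_succ_of_le (single_le_sum (fun _ _ => Nat.zero_le _) (mem_univ e))

/-- The variance of the support size of a uniformly random bipartite multigraph
from `B'(n,m)` is `(mq/(N+m−2))·(N−1)(1−q)`, where `N = n²`, `q = N/(N+m−1)`,
provided `n ≥ 1`, `m ≥ 1` and `(n,m) ≠ (1,1)`. -/
theorem variance_suppSize (n m : ℕ) (hn : 1 ≤ n) (hm : 1 ≤ m) (hnm : ¬(n = 1 ∧ m = 1)) :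
    momentSuppSize n m 2 - (momentSuppSize n m 1) ^ 2 =
      ((m : ℝ) * ((n : ℝ) ^ 2 / ((n : ℝ) ^ 2 + (m : ℝ) - 1)) /
          ((n : ℝ) ^ 2 + (m : ℝ) - 2)) *
        (((n : ℝ) ^ 2 - 1) * (1 - (n : ℝ) ^ 2 / ((n : ℝ) ^ 2 + (m : ℝ) - 1))) := by
  have : Nonempty (Fin n × Fin n) := ⟨(⟨0, hn⟩, ⟨0, hn⟩)⟩
  have hsize : 3 ≤ Fintype.card (Fin n × Fin n) + m := by
    rw [Fintype.card_prod, Fintype.card_fin]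
    rcases Nat.lt_or_ge n 2 with hn2 | hn2
    · obtain rfl : n = 1 := by omega
      omega
    · nlinarith
  have key := variance_card_pos_piAntidiag_univ m hsize
  rw [Fintype.card_prod, Fintype.card_fin, Nat.cast_mul, ← sq] at key
  simp only [momentSuppSize, multigraphs_eq_piAntidiag, pow_one]
  exact key
end

section
/- Let N = n², let m = m(n) be a sequence with m(n) → ∞ and m(n)/N → 0 as n → ∞, and let Z = Z(n) be the number of edges of the support of a uniformly random bipartite multigraph from B'(n,m). Then Var[Z]/(E[Z])² → 0 as n → ∞. -/
open scoped Classical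

lemma mem_multigraphs {n m : ℕ} {f : Fin n × Fin n → ℕ} :
    f ∈ multigraphs n m ↔ ∑ e, f e = m := by
  constructor
  · intro h; exact (Finset.mem_filter.mp h).2
  · intro h
    refine Finset.mem_filter.mpr ⟨?_, h⟩
    rw [Fintype.mem_piFinset]
    intro e
    rw [Finset.mem_range, Nat.lt_succ_iff, ← h]
    exact Finset.single_le_sum (fun _ _ => Nat.zero_le _) (Finset.mem_univ e)

lemma multigraphs_nonempty (n m : ℕ) (hn : 0 < n) : (multigraphs n m).Nonempty := by
  refine ⟨fun e => if e = (⟨0, hn⟩, ⟨0, hn⟩) then m else 0, mem_multigraphs.mpr ?_⟩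
  simp

/-- shifting bijection: summing over multigraphs of total `m+1` positive at `e`
equals summing over multigraphs of total `m`, bumped at `e`. -/
lemma sum_shift {M : Type*} [AddCommMonoid M] (n m : ℕ) (e : Fin n × Fin n)
    (w : (Fin n × Fin n → ℕ) → M) :
    ∑ f ∈ (multigraphs n (m+1)).filter (fun f => 0 < f e), w f
      = ∑ g ∈ multigraphs n m, w (Function.update g e (g e + 1)) := by
  refine Finset.sum_nbij' (fun f => Function.update f e (f e - 1))
    (fun g => Function.update g e (g e + 1)) ?_ ?_ ?_ ?_ ?_
  · intro f hf
    obtain ⟨hf, hfe⟩ := Finset.mem_filter.mp hf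
    rw [mem_multigraphs] at hf ⊢
    rw [Finset.sum_eq_sum_sdiff_singleton_add (Finset.mem_univ e) f] at hf
    rw [Finset.sum_update_of_mem (Finset.mem_univ e)]
    omega
  · intro g hg
    rw [mem_multigraphs] at hg
    refine Finset.mem_filter.mpr ⟨mem_multigraphs.mpr ?_, ?_⟩
    · rw [Finset.sum_eq_sum_sdiff_singleton_add (Finset.mem_univ e) g] at hg
      rw [Finset.sum_update_of_mem (Finset.mem_univ e)]
      omega
    · simp [Function.update_self]
  · intro f hf
    obtain ⟨_, hfe⟩ := Finset.mem_filter.mp hf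
    funext x
    rcases eq_or_ne x e with rfl | hx
    · simp [Function.update_self]; omega
    · simp [Function.update_of_ne hx]
  · intro g hg
    funext x
    rcases eq_or_ne x e with rfl | hx
    · simp [Function.update_self]
    · simp [Function.update_of_ne hx]
  · intro f hf
    obtain ⟨_, hfe⟩ := Finset.mem_filter.mp hf
    congr 1
    funext x
    rcases eq_or_ne x e with rfl | hx
    · simp [Function.update_self]; omega
    · simp [Function.update_of_ne hx]

lemma card_pos_at (n m : ℕ) (e : Fin n × Fin n) :
    ((multigraphs n (m+1)).filter (fun f => 0 < f e)).card = (multigraphs n m).card := by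
  have := sum_shift n m e (fun _ => (1 : ℕ))
  simpa using this

lemma card_pos_pair (n m : ℕ) (e e' : Fin n × Fin n) (h : e ≠ e') :
    ((multigraphs n (m+2)).filter (fun f => 0 < f e ∧ 0 < f e')).card
      = (multigraphs n m).card := by
  have h1 : ((multigraphs n (m+2)).filter (fun f => 0 < f e ∧ 0 < f e')).card
      = ∑ f ∈ (multigraphs n (m+2)).filter (fun f => 0 < f e),
          (if 0 < f e' then 1 else 0) := by
    rw [← Finset.filter_filter, Finset.card_filter]
  rw [h1, sum_shift n (m+1) e]
  have h2 : ∀ g : Fin n × Fin n → ℕ,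
      (if 0 < Function.update g e (g e + 1) e' then (1:ℕ) else 0) = if 0 < g e' then 1 else 0 := by
    intro g
    rw [Function.update_of_ne (Ne.symm h)]
  simp only [h2]
  rw [← Finset.card_filter]
  exact card_pos_at n m e'

lemma sum_at (n m : ℕ) (e : Fin n × Fin n) :
    ∑ f ∈ multigraphs n (m+1), f e
      = (multigraphs n m).card + ∑ g ∈ multigraphs n m, g e := by
  have h0 : ∑ f ∈ multigraphs n (m+1), f e
      = ∑ f ∈ (multigraphs n (m+1)).filter (fun f => 0 < f e), f e := by
    rw [Finset.sum_filter_of_ne]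
    intro f _ h
    omega
  rw [h0, sum_shift n m e (fun f => f e)]
  simp [Function.update_self, Finset.sum_add_distrib, add_comm]

lemma card_rel (n m : ℕ) :
    (m + 1) * (multigraphs n (m+1)).card = (n^2 + m) * (multigraphs n m).card := by
  have h1 : ∑ f ∈ multigraphs n (m+1), ∑ e, f e = (m+1) * (multigraphs n (m+1)).card := by
    rw [Finset.sum_congr rfl (fun f hf => mem_multigraphs.mp hf), Finset.sum_const,
      smul_eq_mul, mul_comm]
  have h2 : ∑ f ∈ multigraphs n (m+1), ∑ e, f e = ∑ e : Fin n × Fin n, ∑ f ∈ multigraphs n (m+1), f e :=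
    Finset.sum_comm
  rw [h2] at h1
  rw [← h1]
  have h3 : ∀ e : Fin n × Fin n, ∑ f ∈ multigraphs n (m+1), f e
      = (multigraphs n m).card + ∑ g ∈ multigraphs n m, g e := fun e => sum_at n m e
  rw [Finset.sum_congr rfl (fun e _ => h3 e), Finset.sum_add_distrib, Finset.sum_const]
  rw [Finset.sum_comm]
  have h4 : ∑ g ∈ multigraphs n m, ∑ e, g e = m * (multigraphs n m).card := by
    rw [Finset.sum_congr rfl (fun f hf => mem_multigraphs.mp hf), Finset.sum_const,
      smul_eq_mul, mul_comm]
  rw [h4]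
  have h5 : Fintype.card (Fin n × Fin n) = n^2 := by simp [sq]
  simp [Finset.card_univ, h5, add_mul, smul_eq_mul]

lemma sum_suppSize (n m : ℕ) :
    ∑ f ∈ multigraphs n (m+1), suppSize f = n^2 * (multigraphs n m).card := by
  have h : ∀ f : Fin n × Fin n → ℕ, suppSize f = ∑ e : Fin n × Fin n, if 0 < f e then 1 else 0 := by
    intro f; rw [suppSize, Finset.card_filter]
  simp only [h]
  rw [Finset.sum_comm]
  have h2 : ∀ e : Fin n × Fin n, (∑ f ∈ multigraphs n (m+1), if 0 < f e then 1 else 0)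
      = (multigraphs n m).card := by
    intro e; rw [← Finset.card_filter]; exact card_pos_at n m e
  rw [Finset.sum_congr rfl (fun e _ => h2 e), Finset.sum_const]
  have h5 : Fintype.card (Fin n × Fin n) = n^2 := by simp [sq]
  simp [Finset.card_univ, h5]

lemma sum_suppSize_sq (n m : ℕ) :
    ∑ f ∈ multigraphs n (m+2), suppSize f ^ 2
      = n^2 * (multigraphs n (m+1)).card
        + (n^2 * n^2 - n^2) * (multigraphs n m).card := by
  have h : ∀ f : Fin n × Fin n → ℕ, suppSize f ^ 2
      = ∑ e : Fin n × Fin n, ∑ e' : Fin n × Fin n,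
          if 0 < f e ∧ 0 < f e' then 1 else 0 := by
    intro f
    rw [sq, suppSize, Finset.card_filter, Finset.sum_mul_sum]
    refine Finset.sum_congr rfl fun e _ => Finset.sum_congr rfl fun e' _ => ?_
    split_ifs with h1 h2 h3 h4 <;> simp_all
  simp only [h]
  rw [Finset.sum_comm]
  have hsw : ∀ e : Fin n × Fin n,
      ∑ f ∈ multigraphs n (m+2), ∑ e' : Fin n × Fin n, (if 0 < f e ∧ 0 < f e' then 1 else 0)
      = ∑ e' : Fin n × Fin n, ∑ f ∈ multigraphs n (m+2), (if 0 < f e ∧ 0 < f e' then 1 else 0) :=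
    fun e => Finset.sum_comm
  have hcnt : ∀ e e' : Fin n × Fin n,
      (∑ f ∈ multigraphs n (m+2), if 0 < f e ∧ 0 < f e' then (1:ℕ) else 0)
      = if e = e' then (multigraphs n (m+1)).card else (multigraphs n m).card := by
    intro e e'
    rw [← Finset.card_filter]
    split_ifs with he
    · subst he
      have : ∀ f : Fin n × Fin n → ℕ, (0 < f e ∧ 0 < f e) ↔ 0 < f e := by intro f; tauto
      rw [Finset.filter_congr (fun f _ => by rw [this f])]
      exact card_pos_at n (m+1) e
    · exact card_pos_pair n m e e' he
  have key : ∀ e : Fin n × Fin n,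
      ∑ f ∈ multigraphs n (m+2), ∑ e' : Fin n × Fin n, (if 0 < f e ∧ 0 < f e' then 1 else 0)
      = (multigraphs n (m+1)).card + (n^2 - 1) * (multigraphs n m).card := by
    intro e
    rw [hsw e]
    rw [Finset.sum_congr rfl (fun e' _ => hcnt e e')]
    rw [Finset.sum_ite, Finset.sum_const, Finset.sum_const, Finset.filter_eq,
      Finset.filter_ne]
    have h5 : Fintype.card (Fin n × Fin n) = n^2 := by simp [sq]
    simp [Finset.card_erase_of_mem, Finset.card_univ, h5]
  rw [Finset.sum_congr rfl (fun e _ => key e), Finset.sum_const]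
  have h5 : Fintype.card (Fin n × Fin n) = n^2 := by simp [sq]
  rw [Finset.card_univ, h5, smul_eq_mul, Nat.mul_add, ← mul_assoc,
    Nat.mul_sub, mul_one]

lemma card_cast_pos (n m : ℕ) (hn : 0 < n) : (0:ℝ) < ((multigraphs n m).card : ℝ) := by
  exact_mod_cast Finset.card_pos.mpr (multigraphs_nonempty n m hn)

lemma moment1_eq (n m : ℕ) :
    momentSuppSize n (m+1) 1
      = ((n^2 : ℝ) * ((multigraphs n m).card : ℝ)) / ((multigraphs n (m+1)).card : ℝ) := by
  rw [momentSuppSize]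
  congr 1
  simp only [pow_one]
  rw [← Nat.cast_sum, sum_suppSize]
  push_cast
  ring

lemma moment2_eq (n m : ℕ) :
    momentSuppSize n (m+2) 2
      = ((n^2 : ℝ) * ((multigraphs n (m+1)).card : ℝ)
          + ((n^2:ℝ) * (n^2:ℝ) - (n^2:ℝ)) * ((multigraphs n m).card : ℝ))
        / ((multigraphs n (m+2)).card : ℝ) := by
  rw [momentSuppSize]
  congr 1
  have : ∀ f ∈ multigraphs n (m+2), ((suppSize f : ℝ))^2 = ((suppSize f ^ 2 : ℕ) : ℝ) := by
    intro f _; push_cast; ring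
  rw [Finset.sum_congr rfl this, ← Nat.cast_sum, sum_suppSize_sq]
  have hle : n^2 ≤ n^2 * n^2 := by
    rcases Nat.eq_zero_or_pos n with rfl | h
    · simp
    · exact Nat.le_mul_of_pos_left _ (by positivity)
  push_cast [hle]
  ring

lemma exact_formula (n m : ℕ) (hn : 0 < n) :
    (momentSuppSize n (m+2) 2 - momentSuppSize n (m+2) 1 ^ 2) /
        momentSuppSize n (m+2) 1 ^ 2
      = (((n:ℝ)^2 - 1) * ((m:ℝ) + 1)) /
          ((n:ℝ)^2 * ((m:ℝ) + 2) * ((n:ℝ)^2 + (m:ℝ))) := by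
  have hN : (0:ℝ) < (n:ℝ)^2 := by positivity
  set N : ℝ := (n:ℝ)^2 with hNdef
  have a0pos := card_cast_pos n (m+2) hn
  have a1pos := card_cast_pos n (m+1) hn
  have a2pos := card_cast_pos n m hn
  set a0 : ℝ := ((multigraphs n (m+2)).card : ℝ)
  set a1 : ℝ := ((multigraphs n (m+1)).card : ℝ)
  set a2 : ℝ := ((multigraphs n m).card : ℝ)
  have rel1 : ((m:ℝ) + 2) * a0 = (N + ((m:ℝ)+1)) * a1 := by
    have := card_rel n (m+1)
    have := congrArg (fun k : ℕ => (k : ℝ)) this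
    push_cast at this
    rw [hNdef]
    linarith
  have rel2 : ((m:ℝ) + 1) * a1 = (N + (m:ℝ)) * a2 := by
    have := card_rel n m
    have := congrArg (fun k : ℕ => (k : ℝ)) this
    push_cast at this
    rw [hNdef]
    linarith
  have hNm : N + (m:ℝ) > 0 := by positivity
  have hNm1 : N + (m:ℝ) + 1 > 0 := by positivity
  have ha0 : a0 = (N + ((m:ℝ)+1)) * a1 / ((m:ℝ) + 2) := by
    field_simp at rel1 ⊢
    linarith
  have ha2 : a2 = ((m:ℝ) + 1) * a1 / (N + (m:ℝ)) := by
    field_simp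
    linarith
  have hm1 : momentSuppSize n (m+2) 1 = N * a1 / a0 := by
    have := moment1_eq n (m+1)
    rw [show m + 1 + 1 = m + 2 from rfl] at this
    rw [this, hNdef]
  have hm2 : momentSuppSize n (m+2) 2 = (N * a1 + (N * N - N) * a2) / a0 := moment2_eq n m
  rw [hm1, hm2, ha0, ha2]
  have hm2' : (m:ℝ) + 2 ≠ 0 := by positivity
  field_simp
  ring


/-- If `m = m(n) → ∞` and `m/N → 0` where `N = n²`, then for the support size `Z`
of a uniformly random bipartite multigraph from `B'(n,m)` we have
`Var[Z]/(E[Z])² → 0` as `n → ∞`. -/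
theorem variance_over_mean_sq_tendsto_zero (m : ℕ → ℕ)
    (hm1 : Filter.Tendsto m Filter.atTop Filter.atTop)
    (hm2 : Filter.Tendsto (fun n => (m n : ℝ) / (n : ℝ) ^ 2) Filter.atTop (nhds 0)) :
    Filter.Tendsto
      (fun n => (momentSuppSize n (m n) 2 - (momentSuppSize n (m n) 1) ^ 2) /
        (momentSuppSize n (m n) 1) ^ 2)
      Filter.atTop (nhds 0) := by
  have hn_ev : ∀ᶠ n in Filter.atTop, 1 ≤ n := Filter.eventually_ge_atTop 1
  have hm_ev : ∀ᶠ n in Filter.atTop, 2 ≤ m n := hm1.eventually_ge_atTop 2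
  refine tendsto_of_tendsto_of_tendsto_of_le_of_le'
    (g := fun _ : ℕ => (0:ℝ)) (h := fun n : ℕ => 1/(n:ℝ))
    tendsto_const_nhds tendsto_one_div_atTop_nhds_zero_nat ?_ ?_
  · filter_upwards [hn_ev, hm_ev] with n hn hm
    obtain ⟨k, hk⟩ : ∃ k, m n = k + 2 := ⟨m n - 2, by omega⟩
    rw [hk, exact_formula n k hn]
    have h1 : (1:ℝ) ≤ (n:ℝ) := by exact_mod_cast hn
    have hk0 : (0:ℝ) ≤ (k:ℝ) := Nat.cast_nonneg k
    apply div_nonneg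
    · have hsq : (1:ℝ) ≤ (n:ℝ)^2 := by nlinarith
      apply mul_nonneg <;> linarith
    · positivity
  · filter_upwards [hn_ev, hm_ev] with n hn hm
    obtain ⟨k, hk⟩ : ∃ k, m n = k + 2 := ⟨m n - 2, by omega⟩
    rw [hk, exact_formula n k hn]
    have h1 : (1:ℝ) ≤ (n:ℝ) := by exact_mod_cast hn
    have hk0 : (0:ℝ) ≤ (k:ℝ) := Nat.cast_nonneg k
    rw [div_le_div_iff₀ (by positivity) (by positivity)]
    have hx : (0:ℝ) < (n:ℝ) := by linarith
    have h34 : (n:ℝ)^3 ≤ (n:ℝ)^4 := pow_le_pow_right₀ h1 (by norm_num)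
    have hk34 : (n:ℝ)^3 * (k:ℝ) ≤ (n:ℝ)^4 * (k:ℝ) := mul_le_mul_of_nonneg_right h34 hk0
    nlinarith [h34, hk34, mul_nonneg hk0 hk0, pow_nonneg hx.le 4,
      mul_nonneg (mul_nonneg (pow_nonneg hx.le 2) hk0) hk0,
      mul_nonneg (pow_nonneg hx.le 2) hk0, mul_nonneg hx.le hk0]
end

section
/- Consider the sequence of complete graphs K_n. If t = t(n) satisfies t(n)/√n → ∞, then the probability that a uniformly random configuration of t(n) pebbles on K_n is solvable tends to 1 as n → ∞; if t(n) ≥ 1 and t(n)/√n → 0, then this probability tends to 0 as n → ∞. In other words, the pebbling threshold of the sequence of cliques is Θ(√N), where N = n is the number of vertices. -/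
open scoped Classical

/-- The finite set of all configurations of `t` pebbles on the vertex set `V`. -/
def pebbleConfigs (V : Type*) [Fintype V] [DecidableEq V] (t : ℕ) : Finset (V → ℕ) :=
  (Fintype.piFinset fun _ : V => Finset.range (t + 1)).filter fun C => ∑ v, C v = t

/-- The probability that a uniformly random configuration of `t` pebbles on the
vertices of `G` is solvable. -/
noncomputable def solvProb {V : Type*} [Fintype V] [DecidableEq V]
    (G : SimpleGraph V) (t : ℕ) : ℝ :=
  (((pebbleConfigs V t).filter fun C => PebblingSolvable G C).card : ℝ) /
    ((pebbleConfigs V t).card : ℝ)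

/-!
On `K_n` a configuration is unsolvable exactly when every vertex carries at most one pebble and
some vertex carries none, so for `t < n` the unsolvable configurations of `t` pebbles are the
`n.choose t` indicator functions of `t`-sets. Their proportion among all
`(n + t - 1).choose t` configurations is `∏_{i < t} (n - i) / (n + i)`, which lies between
`1 - 2 t² / n` and `exp (-(t² / n - 1) / 2)`; both bounds are governed by `t² / n`.
-/

open Finset Filter Topology

section Pebbling

variable {V : Type*}

lemma eq_of_reflTransGen_pebblingMove {G : SimpleGraph V} {C C' : V → ℕ} (hC : ∀ v, C v < 2)
    (h : Relation.ReflTransGen (PebblingMove G) C C') : C' = C := by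
  rcases Relation.ReflTransGen.cases_head h with rfl | ⟨_, ⟨u, -, -, hu, -⟩, -⟩
  · rfl
  · exact absurd hu (hC u).not_ge

lemma not_pebblingSolvable_top_iff {C : V → ℕ} :
    ¬ PebblingSolvable (⊤ : SimpleGraph V) C ↔ (∀ v, C v ≤ 1) ∧ ∃ v, C v = 0 := by
  refine ⟨fun h => ?_, ?_⟩
  · contrapose! h
    intro r
    by_cases hmany : ∃ v, 2 ≤ C v
    · obtain ⟨v, hv⟩ := hmany
      by_cases hrv : r = v
      · subst hrv
        exact ⟨C, .refl, by omega⟩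
      · exact ⟨_, .single ⟨v, r, Ne.symm hrv, hv, rfl⟩, by simp [hrv]⟩
    · push Not at hmany
      exact ⟨C, .refl, Nat.one_le_iff_ne_zero.2 (h (fun v => Nat.le_of_lt_succ (hmany v)) r)⟩
  · rintro ⟨hle, r, hr⟩ hsolv
    obtain ⟨C', hmoves, hC'⟩ := hsolv r
    rw [eq_of_reflTransGen_pebblingMove (fun v => Nat.lt_succ_of_le (hle v)) hmoves] at hC'
    omega

end Pebbling

section Counting

variable {V : Type*} [Fintype V] [DecidableEq V]

lemma pebbleConfigs_eq_piAntidiag (t : ℕ) : pebbleConfigs V t = piAntidiag univ t := by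
  ext C
  simp only [pebbleConfigs, mem_filter, Fintype.mem_piFinset, mem_range, mem_piAntidiag,
    mem_univ, implies_true, and_true]
  refine ⟨And.right, fun h => ⟨fun v => ?_, h⟩⟩
  rw [← h]
  exact Nat.lt_succ_of_le (single_le_sum (fun w _ => Nat.zero_le (C w)) (mem_univ v))

lemma card_pebbleConfigs (t : ℕ) :
    #(pebbleConfigs V t) = (Fintype.card V + t - 1).choose t := by
  rw [pebbleConfigs_eq_piAntidiag, ← map_sym_eq_piAntidiag, card_map, sym_univ, card_univ,
    Sym.card_sym_eq_choose]

lemma card_not_pebblingSolvable_top (t : ℕ) :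
    #((pebbleConfigs V t).filter fun C => ¬ PebblingSolvable (⊤ : SimpleGraph V) C) =
      #((univ.powersetCard t).filter fun s : Finset V => s ≠ univ) := by
  refine card_nbij' (fun C => univ.filter fun v => C v = 1) (fun s v => if v ∈ s then 1 else 0)
    ?_ ?_ ?_ ?_
  · intro C hC
    simp only [coe_filter, Set.mem_ofPred_eq, pebbleConfigs_eq_piAntidiag, mem_piAntidiag,
      not_pebblingSolvable_top_iff] at hC ⊢
    obtain ⟨⟨hsum, -⟩, hle, v, hv⟩ := hC
    refine ⟨mem_powersetCard_univ.2 ?_, fun huniv => ?_⟩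
    · rw [card_filter, ← hsum]
      exact sum_congr rfl fun v _ => by have := hle v; split_ifs <;> omega
    · have := eq_univ_iff_forall.1 huniv v
      simp [hv] at this
  · intro s hs
    simp only [coe_filter, Set.mem_ofPred_eq, mem_powersetCard_univ, pebbleConfigs_eq_piAntidiag,
      mem_piAntidiag, not_pebblingSolvable_top_iff] at hs ⊢
    obtain ⟨v, hv⟩ : ∃ v, v ∉ s := by simpa [eq_univ_iff_forall] using hs.2
    refine ⟨⟨by simp [hs.1], by simp⟩, fun w => by split_ifs <;> omega, v, by simp [hv]⟩
  · intro C hC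
    simp only [coe_filter, Set.mem_ofPred_eq, not_pebblingSolvable_top_iff] at hC
    funext v
    have := hC.2.1 v
    by_cases h : C v = 1
    · simp [h]
    · simp [h]
      omega
  · intro s _
    ext v
    simp

lemma card_not_pebblingSolvable_top_le (t : ℕ) :
    #((pebbleConfigs V t).filter fun C => ¬ PebblingSolvable (⊤ : SimpleGraph V) C) ≤
      (Fintype.card V).choose t := by
  rw [card_not_pebblingSolvable_top, ← card_univ, ← card_powersetCard]
  exact card_filter_le _ _

lemma card_not_pebblingSolvable_top_of_lt {t : ℕ} (ht : t < Fintype.card V) :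
    #((pebbleConfigs V t).filter fun C => ¬ PebblingSolvable (⊤ : SimpleGraph V) C) =
      (Fintype.card V).choose t := by
  rw [card_not_pebblingSolvable_top, ← card_univ, ← card_powersetCard, filter_true_of_mem]
  rintro s hs rfl
  exact ht.ne (mem_powersetCard.1 hs).2.symm

end Counting

section Probability

variable {V : Type*} [Fintype V] [DecidableEq V]

lemma solvProb_nonneg (G : SimpleGraph V) (t : ℕ) : 0 ≤ solvProb G t :=
  div_nonneg (Nat.cast_nonneg _) (Nat.cast_nonneg _)

lemma solvProb_le_one (G : SimpleGraph V) (t : ℕ) : solvProb G t ≤ 1 :=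
  div_le_one_of_le₀ (mod_cast card_filter_le _ _) (Nat.cast_nonneg _)

lemma one_sub_solvProb [Nonempty V] (G : SimpleGraph V) (t : ℕ) :
    1 - solvProb G t =
      #((pebbleConfigs V t).filter fun C => ¬ PebblingSolvable G C) /
        (Fintype.card V + t - 1).choose t := by
  have hpos : (0 : ℝ) < (Fintype.card V + t - 1).choose t :=
    mod_cast Nat.choose_pos (by have := Fintype.card_pos (α := V); omega)
  rw [solvProb, ← card_pebbleConfigs] at *
  rw [eq_div_iff hpos.ne', sub_mul, div_mul_cancel₀ _ hpos.ne', one_mul, sub_eq_iff_eq_add',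
    ← Nat.cast_add, card_filter_add_card_filter_not]

lemma one_sub_solvProb_top_le [Nonempty V] (t : ℕ) :
    1 - solvProb (⊤ : SimpleGraph V) t ≤
      ((Fintype.card V).choose t : ℝ) / (Fintype.card V + t - 1).choose t := by
  rw [one_sub_solvProb]
  gcongr
  exact_mod_cast card_not_pebblingSolvable_top_le t

lemma one_sub_solvProb_top_of_lt {t : ℕ} (ht : t < Fintype.card V) :
    1 - solvProb (⊤ : SimpleGraph V) t =
      ((Fintype.card V).choose t : ℝ) / (Fintype.card V + t - 1).choose t := by
  have : Nonempty V := Fintype.card_pos_iff.1 (by omega)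
  rw [one_sub_solvProb, card_not_pebblingSolvable_top_of_lt ht]

end Probability

section ChooseRatio

lemma sum_range_cast_mul_two (t : ℕ) : (∑ i ∈ range t, (i : ℝ)) * 2 = (t : ℝ) ^ 2 - t := by
  induction t with
  | zero => simp
  | succ k ih =>
    rw [sum_range_succ, add_mul, ih]
    push_cast
    ring

lemma choose_div_choose_eq_prod {n t : ℕ} (ht : t ≤ n) :
    (n.choose t : ℝ) / (n + t - 1).choose t = ∏ i ∈ range t, ((n : ℝ) - i) / (n + i) := by
  have hdesc : (t.factorial : ℝ) * n.choose t = ∏ i ∈ range t, ((n : ℝ) - i) := by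
    rw [← Nat.cast_mul, ← Nat.descFactorial_eq_factorial_mul_choose,
      Nat.descFactorial_eq_prod_range, Nat.cast_prod]
    exact prod_congr rfl fun i hi => Nat.cast_sub (by have := mem_range.1 hi; omega)
  have hasc : (t.factorial : ℝ) * (n + t - 1).choose t = ∏ i ∈ range t, ((n : ℝ) + i) := by
    rw [← Nat.cast_mul, ← Nat.ascFactorial_eq_factorial_mul_choose',
      Nat.ascFactorial_eq_prod_range]
    push_cast
    rfl
  rw [prod_div_distrib, ← hdesc, ← hasc, mul_div_mul_left _ _ (mod_cast t.factorial_ne_zero)]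

lemma choose_div_choose_le_exp {n : ℕ} (hn : 0 < n) (t : ℕ) :
    (n.choose t : ℝ) / (n + t - 1).choose t ≤ Real.exp (-(((t : ℝ) ^ 2 / n - 1) / 2)) := by
  rcases lt_or_ge n t with hnt | htn
  · rw [Nat.choose_eq_zero_of_lt hnt, Nat.cast_zero, zero_div]
    exact (Real.exp_pos _).le
  have hn' : (0 : ℝ) < n := mod_cast hn
  have hfactor : ∀ i ∈ range t, ((n : ℝ) - i) / (n + i) ≤ Real.exp (-(i / n)) := by
    intro i hi
    have hin : (i : ℝ) ≤ n := mod_cast (mem_range.1 hi).le.trans htn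
    calc ((n : ℝ) - i) / (n + i) ≤ (n - i) / n := by gcongr; linarith
      _ = 1 - i / n := by field_simp
      _ ≤ Real.exp (-(i / n)) := Real.one_sub_le_exp_neg _
  calc (n.choose t : ℝ) / (n + t - 1).choose t
      ≤ ∏ i ∈ range t, Real.exp (-(i / n)) := by
        rw [choose_div_choose_eq_prod htn]
        refine prod_le_prod (fun i hi => div_nonneg ?_ (by positivity)) hfactor
        linarith [(mod_cast (mem_range.1 hi).le.trans htn : (i : ℝ) ≤ n)]
    _ = Real.exp (-(((t : ℝ) ^ 2 - t) / 2 / n)) := by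
        rw [← Real.exp_sum, sum_neg_distrib, ← sum_div, ← sum_range_cast_mul_two,
          mul_div_cancel_right₀ _ two_ne_zero]
    _ ≤ Real.exp (-(((t : ℝ) ^ 2 / n - 1) / 2)) := by
        have : (t : ℝ) / n ≤ 1 := (div_le_one hn').2 (mod_cast htn)
        rw [Real.exp_le_exp, neg_le_neg_iff,
          show ((t : ℝ) ^ 2 - t) / 2 / n = ((t : ℝ) ^ 2 / n - t / n) / 2 by ring]
        linarith

lemma one_sub_le_choose_div_choose {n t : ℕ} (ht : t < n) :
    1 - 2 * ((t : ℝ) ^ 2 / n) ≤ (n.choose t : ℝ) / (n + t - 1).choose t := by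
  have hn : (0 : ℝ) < n := mod_cast (Nat.zero_le t).trans_lt ht
  have htn : (t : ℝ) ≤ n := mod_cast ht.le
  have ht0 : (0 : ℝ) ≤ t := Nat.cast_nonneg t
  calc 1 - 2 * ((t : ℝ) ^ 2 / n) ≤ 1 - 2 * (t ^ 2 / (n + t)) := by
        gcongr
        linarith
    _ = 1 + (t : ℝ) * (-(2 * t / (n + t))) := by ring
    _ ≤ (1 + -(2 * t / (n + t))) ^ t := by
        refine one_add_mul_le_pow ?_ t
        rw [neg_le_neg_iff, div_le_iff₀ (by positivity)]
        linarith
    _ = ∏ _i ∈ range t, ((n : ℝ) - t) / (n + t) := by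
        rw [prod_const, card_range]
        congr 1
        field_simp
        ring
    _ ≤ ∏ i ∈ range t, ((n : ℝ) - i) / (n + i) := by
        refine prod_le_prod (fun _ _ => div_nonneg (by linarith) (by positivity)) fun i hi => ?_
        have hit : (i : ℝ) ≤ t := mod_cast (mem_range.1 hi).le
        gcongr; linarith
    _ = (n.choose t : ℝ) / (n + t - 1).choose t := (choose_div_choose_eq_prod ht.le).symm

end ChooseRatio

section Threshold

variable {t : ℕ → ℕ}

theorem tendsto_solvProb_top_one
    (h : Tendsto (fun n => (t n : ℝ) ^ 2 / n) atTop atTop) :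
    Tendsto (fun n => solvProb (⊤ : SimpleGraph (Fin n)) (t n)) atTop (𝓝 1) := by
  have hexp : Tendsto (fun n => Real.exp (-(((t n : ℝ) ^ 2 / n - 1) / 2))) atTop (𝓝 0) :=
    Real.tendsto_exp_neg_atTop_nhds_zero.comp
      ((tendsto_atTop_add_const_right _ (-1) h).atTop_div_const two_pos)
  refine tendsto_of_tendsto_of_tendsto_of_le_of_le' (by simpa using hexp.const_sub 1)
    tendsto_const_nhds ?_ (.of_forall fun n => solvProb_le_one _ _)
  filter_upwards [eventually_gt_atTop 0] with n hn
  have : NeZero n := ⟨hn.ne'⟩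
  have hsolv := one_sub_solvProb_top_le (V := Fin n) (t n)
  rw [Fintype.card_fin] at hsolv
  linarith [choose_div_choose_le_exp hn (t n)]

theorem tendsto_solvProb_top_zero
    (h : Tendsto (fun n => (t n : ℝ) ^ 2 / n) atTop (𝓝 0)) :
    Tendsto (fun n => solvProb (⊤ : SimpleGraph (Fin n)) (t n)) atTop (𝓝 0) := by
  refine tendsto_of_tendsto_of_tendsto_of_le_of_le' tendsto_const_nhds
    (by simpa using h.const_mul 2) (.of_forall fun n => solvProb_nonneg _ _) ?_
  filter_upwards [h.eventually (gt_mem_nhds one_pos), eventually_gt_atTop 0] with n hsmall hn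
  have ht : t n < n := by
    have : (t n : ℝ) ^ 2 < n := (div_lt_one (mod_cast hn)).1 hsmall
    exact (Nat.le_self_pow two_ne_zero (t n)).trans_lt (mod_cast this)
  have hsolv := one_sub_solvProb_top_of_lt (V := Fin n) (by simpa using ht)
  rw [Fintype.card_fin] at hsolv
  linarith [one_sub_le_choose_div_choose ht]

end Threshold

/-- The pebbling threshold of the sequence of cliques is `Θ(√N)`:
if `t(n)/√n → ∞` then a uniformly random configuration of `t(n)` pebbles on `K_n`
is solvable with probability tending to `1`, while if `t(n) ≥ 1` and `t(n)/√n → 0`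
then this probability tends to `0`. -/
theorem pebbling_threshold_clique (t : ℕ → ℕ) :
    (Filter.Tendsto (fun n => (t n : ℝ) / Real.sqrt n) Filter.atTop Filter.atTop →
      Filter.Tendsto (fun n => solvProb (⊤ : SimpleGraph (Fin n)) (t n))
        Filter.atTop (nhds 1)) ∧
    ((∀ n, 1 ≤ t n) →
      Filter.Tendsto (fun n => (t n : ℝ) / Real.sqrt n) Filter.atTop (nhds 0) →
      Filter.Tendsto (fun n => solvProb (⊤ : SimpleGraph (Fin n)) (t n))
        Filter.atTop (nhds 0)) := by
  have hsq : (fun n => ((t n : ℝ) / Real.sqrt n) ^ 2) = fun n => (t n : ℝ) ^ 2 / n := by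
    funext n
    rw [div_pow, Real.sq_sqrt n.cast_nonneg]
  refine ⟨fun h => tendsto_solvProb_top_one ?_, fun _ h => tendsto_solvProb_top_zero ?_⟩
  · exact hsq ▸ (tendsto_pow_atTop two_ne_zero).comp h
  · simpa [hsq] using h.pow 2
end
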